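/- arXiv:2010.15455 — 3 statements merged into one kernel-verified Lean document; each statement's English description precedes it below -/
import Mathlib

section
/- Theorem 1 (subadditivity of the ES coalition game): Assume 0 ≤ c⁻_t ≤ c⁺_t for every time slot t. Then for any two disjoint coalitions S¹, S² ⊆ 𝒩 (S¹ ∩ S² = ∅), the coalition values satisfy ν(S¹ ∪ S²) ≤ ν(S¹) + ν(S²). -/
open Finset

/-- Fixed data of the ES sharing model. -/
structure ESParams (ι Ω : Type) (T : ℕ) where
  /-- scenario weights -/
  ρ : Ω → ℝ
  /-- purchase prices -/
  cbuy : Fin T → ℝ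
  /-- selling prices -/
  csell : Fin T → ℝ
  /-- demand-charge price -/
  cmax : ℝ
  /-- amortized energy-capacity price -/
  ke : ℝ
  /-- amortized power-capacity price -/
  kp : ℝ
  /-- charging efficiency -/
  ηch : ℝ
  /-- discharging efficiency -/
  ηdis : ℝ
  /-- charging rate limit -/
  pchmax : ℝ
  /-- discharging rate limit -/
  pdismax : ℝ
  /-- net load of building `i` at time `t` in scenario `ω` -/
  d : ι → Fin T → Ω → ℝ
  ρ_nonneg : ∀ ω, 0 ≤ ρ ω
  cmax_nonneg : 0 ≤ cmax
  ke_nonneg : 0 ≤ ke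
  kp_nonneg : 0 ≤ kp
  ηch_pos : 0 < ηch
  ηch_le_one : ηch ≤ 1
  ηdis_pos : 0 < ηdis
  ηdis_le_one : ηdis ≤ 1
  pchmax_nonneg : 0 ≤ pchmax
  pdismax_nonneg : 0 ≤ pdismax

/-- A (candidate) solution: capacities and per-building operation variables. -/
structure ESSol (ι Ω : Type) (T : ℕ) where
  E : ℝ
  P : ℝ
  pch : ι → Fin T → Ω → ℝ
  pdis : ι → Fin T → Ω → ℝ
  sto : ι → ℕ → Ω → ℝ
  pbuy : ι → Fin T → Ω → ℝ
  psell : ι → Fin T → Ω → ℝ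
  pmax : ι → Ω → ℝ

variable {ι Ω : Type} {T : ℕ}

/-- Relaxed feasibility (complementarity constraints dropped) for coalition `S`. -/
def Feasible [Fintype Ω] (p : ESParams ι Ω T) (S : Finset ι) (s : ESSol ι Ω T) : Prop :=
  0 ≤ s.E ∧ 0 ≤ s.P ∧
  (∀ i ∈ S, ∀ ω : Ω, ∀ t : Fin T,
    0 ≤ s.pch i t ω ∧ s.pch i t ω ≤ p.pchmax ∧
    0 ≤ s.pdis i t ω ∧ s.pdis i t ω ≤ p.pdismax ∧
    0 ≤ s.pbuy i t ω ∧ 0 ≤ s.psell i t ω ∧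
    s.pbuy i t ω - s.psell i t ω = s.pch i t ω - s.pdis i t ω + p.d i t ω ∧
    s.pbuy i t ω ≤ s.pmax i ω ∧ s.psell i t ω ≤ s.pmax i ω ∧
    s.sto i (t.1 + 1) ω = s.sto i t.1 ω + p.ηch * s.pch i t ω - s.pdis i t ω / p.ηdis) ∧
  (∀ i ∈ S, ∀ ω : Ω,
    s.sto i 0 ω = 0 ∧ 0 ≤ s.pmax i ω ∧ ∀ n : ℕ, n ≤ T → 0 ≤ s.sto i n ω) ∧
  (∀ ω : Ω, ∀ t : Fin T,
    (∑ i ∈ S, s.sto i t.1 ω) ≤ s.E ∧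
    (∑ i ∈ S, s.pch i t ω) ≤ s.P ∧
    (∑ i ∈ S, s.pdis i t ω) ≤ s.P)

/-- Total cost (capital plus weighted operation cost) of solution `s` for coalition `S`. -/
def cost [Fintype Ω] (p : ESParams ι Ω T) (S : Finset ι) (s : ESSol ι Ω T) : ℝ :=
  p.ke * s.E + p.kp * s.P +
    ∑ ω : Ω, p.ρ ω * ∑ i ∈ S,
      ((∑ t : Fin T, (p.cbuy t * s.pbuy i t ω - p.csell t * s.psell i t ω))
        + p.cmax * s.pmax i ω)

/-- Coalition value: infimum of total cost over relaxed feasible solutions. -/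
noncomputable def nu [Fintype Ω] (p : ESParams ι Ω T) (S : Finset ι) : ℝ :=
  sInf {c : ℝ | ∃ s : ESSol ι Ω T, Feasible p S s ∧ cost p S s = c}

/-!
Feasible operations of disjoint coalitions can be run side by side on one storage whose energy
and power capacities are the sums of theirs: per-building constraints are untouched, the shared
capacity constraints add up, and so does the cost. Hence every sum of a feasible cost for `S¹`
and one for `S²` is a feasible cost for `S¹ ∪ S²`, and `ν(S¹) + ν(S²)`, the infimum of those
sums, is at least `ν(S¹ ∪ S²)`. The price assumption `0 ≤ c⁻ₜ ≤ c⁺ₜ` is what makes the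
feasible costs bounded below, so that these infima are not the junk value of `sInf`.
-/

open scoped Pointwise

theorem Finset.sum_union_ite_mem {M : Type*} [AddCommMonoid M] [DecidableEq ι]
    {S₁ S₂ : Finset ι} (h : Disjoint S₁ S₂) (f g : ι → M) :
    ∑ i ∈ S₁ ∪ S₂, (if i ∈ S₁ then f i else g i) = ∑ i ∈ S₁, f i + ∑ i ∈ S₂, g i := by
  rw [sum_union h, sum_ite_of_true fun _ hi => hi,
    sum_ite_of_false fun _ hi hi₁ => disjoint_left.mp h hi₁ hi]

theorem neg_mul_abs_add_le_trade_cost {cbuy csell buy sell ch dis d dismax : ℝ}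
    (hsell : 0 ≤ csell) (hprice : csell ≤ cbuy) (hbuy : 0 ≤ buy) (hch : 0 ≤ ch)
    (hdis : dis ≤ dismax) (hbal : buy - sell = ch - dis + d) :
    -(csell * (|d| + dismax)) ≤ cbuy * buy - csell * sell :=
  calc -(csell * (|d| + dismax)) ≤ csell * (ch - dis + d) := by
        nlinarith [neg_abs_le d]
    _ = csell * (buy - sell) := by rw [hbal]
    _ ≤ cbuy * buy - csell * sell := by nlinarith [mul_le_mul_of_nonneg_right hprice hbuy]

section Coalitions

variable (p : ESParams ι Ω T)

def buildingCost (s : ESSol ι Ω T) (i : ι) (ω : Ω) : ℝ :=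
  ∑ t : Fin T, (p.cbuy t * s.pbuy i t ω - p.csell t * s.psell i t ω) + p.cmax * s.pmax i ω

noncomputable def noStorage : ESSol ι Ω T where
  E := 0
  P := 0
  pch _ _ _ := 0
  pdis _ _ _ := 0
  sto _ _ _ := 0
  pbuy i t ω := max (p.d i t ω) 0
  psell i t ω := max (-p.d i t ω) 0
  pmax i ω := ∑ t : Fin T, |p.d i t ω|

variable [Fintype Ω]

def feasibleCosts (S : Finset ι) : Set ℝ :=
  {c : ℝ | ∃ s : ESSol ι Ω T, Feasible p S s ∧ cost p S s = c}

theorem cost_eq_sum_buildingCost (S : Finset ι) (s : ESSol ι Ω T) :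
    cost p S s = p.ke * s.E + p.kp * s.P + ∑ ω : Ω, p.ρ ω * ∑ i ∈ S, buildingCost p s i ω :=
  rfl

theorem feasible_noStorage (S : Finset ι) : Feasible p S (noStorage p) := by
  have abs_le_sum : ∀ i ω (t : Fin T), |p.d i t ω| ≤ ∑ t' : Fin T, |p.d i t' ω| :=
    fun i ω t => single_le_sum (f := fun t' => |p.d i t' ω|) (fun _ _ => abs_nonneg _)
      (mem_univ t)
  refine ⟨le_rfl, le_rfl, fun i _ ω t => ?_, fun i _ ω => ?_, fun ω t => ?_⟩
  · refine ⟨le_rfl, p.pchmax_nonneg, le_rfl, p.pdismax_nonneg, le_max_right _ _,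
      le_max_right _ _, ?_, ?_, ?_, ?_⟩ <;> simp only [noStorage]
    · simp [max_zero_sub_max_neg_zero_eq_self]
    · exact (max_le (le_abs_self _) (abs_nonneg _)).trans (abs_le_sum i ω t)
    · exact (max_le (neg_le_abs _) (abs_nonneg _)).trans (abs_le_sum i ω t)
    · ring
  · exact ⟨rfl, sum_nonneg (s := univ) fun t _ => abs_nonneg (p.d i t ω), fun _ _ => le_rfl⟩
  · simp [noStorage]

theorem feasibleCosts_nonempty (S : Finset ι) : (feasibleCosts p S).Nonempty :=
  ⟨_, noStorage p, feasible_noStorage p S, rfl⟩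

variable {p}

theorem sum_neg_le_buildingCost (hprice : ∀ t : Fin T, 0 ≤ p.csell t ∧ p.csell t ≤ p.cbuy t)
    {S : Finset ι} {s : ESSol ι Ω T} (hs : Feasible p S s) {i : ι} (hi : i ∈ S) (ω : Ω) :
    ∑ t : Fin T, -(p.csell t * (|p.d i t ω| + p.pdismax)) ≤ buildingCost p s i ω := by
  obtain ⟨-, -, hop, hbuilding, -⟩ := hs
  have htrade : ∀ t : Fin T, -(p.csell t * (|p.d i t ω| + p.pdismax)) ≤
      p.cbuy t * s.pbuy i t ω - p.csell t * s.psell i t ω := fun t => by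
    obtain ⟨hch, -, -, hdis, hbuy, -, hbal, -⟩ := hop i hi ω t
    exact neg_mul_abs_add_le_trade_cost (hprice t).1 (hprice t).2 hbuy hch hdis hbal
  have hpeak : 0 ≤ p.cmax * s.pmax i ω := mul_nonneg p.cmax_nonneg (hbuilding i hi ω).2.1
  unfold buildingCost
  linarith [sum_le_sum fun t (_ : t ∈ univ) => htrade t]

theorem bddBelow_feasibleCosts (hprice : ∀ t : Fin T, 0 ≤ p.csell t ∧ p.csell t ≤ p.cbuy t)
    (S : Finset ι) : BddBelow (feasibleCosts p S) := by
  refine ⟨∑ ω : Ω, p.ρ ω * ∑ i ∈ S, ∑ t : Fin T, -(p.csell t * (|p.d i t ω| + p.pdismax)), ?_⟩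
  rintro _ ⟨s, hs, rfl⟩
  have hE : 0 ≤ p.ke * s.E := mul_nonneg p.ke_nonneg hs.1
  have hP : 0 ≤ p.kp * s.P := mul_nonneg p.kp_nonneg hs.2.1
  have hops := sum_le_sum fun ω (_ : ω ∈ univ) => mul_le_mul_of_nonneg_left
    (sum_le_sum fun i hi => sum_neg_le_buildingCost hprice hs hi ω) (p.ρ_nonneg ω)
  rw [cost_eq_sum_buildingCost]
  linarith

end Coalitions

section Merge

variable [DecidableEq ι] {p : ESParams ι Ω T} {S₁ S₂ : Finset ι}

def ESSol.merge (S : Finset ι) (s₁ s₂ : ESSol ι Ω T) : ESSol ι Ω T where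
  E := s₁.E + s₂.E
  P := s₁.P + s₂.P
  pch i := if i ∈ S then s₁.pch i else s₂.pch i
  pdis i := if i ∈ S then s₁.pdis i else s₂.pdis i
  sto i := if i ∈ S then s₁.sto i else s₂.sto i
  pbuy i := if i ∈ S then s₁.pbuy i else s₂.pbuy i
  psell i := if i ∈ S then s₁.psell i else s₂.psell i
  pmax i := if i ∈ S then s₁.pmax i else s₂.pmax i

theorem buildingCost_merge (s₁ s₂ : ESSol ι Ω T) (i : ι) (ω : Ω) :
    buildingCost p (s₁.merge S₁ s₂) i ω =
      if i ∈ S₁ then buildingCost p s₁ i ω else buildingCost p s₂ i ω := by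
  by_cases hi : i ∈ S₁ <;> simp [buildingCost, ESSol.merge, hi]

variable [Fintype Ω]

theorem feasible_merge (h : Disjoint S₁ S₂) {s₁ s₂ : ESSol ι Ω T}
    (h₁ : Feasible p S₁ s₁) (h₂ : Feasible p S₂ s₂) :
    Feasible p (S₁ ∪ S₂) (s₁.merge S₁ s₂) := by
  obtain ⟨hE₁, hP₁, hop₁, hbuilding₁, hcap₁⟩ := h₁
  obtain ⟨hE₂, hP₂, hop₂, hbuilding₂, hcap₂⟩ := h₂
  refine ⟨add_nonneg hE₁ hE₂, add_nonneg hP₁ hP₂, fun i hi ω t => ?_, fun i hi ω => ?_,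
    fun ω t => ?_⟩
  · by_cases hi₁ : i ∈ S₁
    · simpa [ESSol.merge, hi₁] using hop₁ i hi₁ ω t
    · simpa [ESSol.merge, hi₁] using hop₂ i ((mem_union.mp hi).resolve_left hi₁) ω t
  · by_cases hi₁ : i ∈ S₁
    · simpa [ESSol.merge, hi₁] using hbuilding₁ i hi₁ ω
    · simpa [ESSol.merge, hi₁] using hbuilding₂ i ((mem_union.mp hi).resolve_left hi₁) ω
  · simp only [ESSol.merge, ite_apply, sum_union_ite_mem h]
    exact ⟨add_le_add (hcap₁ ω t).1 (hcap₂ ω t).1, add_le_add (hcap₁ ω t).2.1 (hcap₂ ω t).2.1,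
      add_le_add (hcap₁ ω t).2.2 (hcap₂ ω t).2.2⟩

theorem cost_merge (h : Disjoint S₁ S₂) (s₁ s₂ : ESSol ι Ω T) :
    cost p (S₁ ∪ S₂) (s₁.merge S₁ s₂) = cost p S₁ s₁ + cost p S₂ s₂ := by
  simp only [cost_eq_sum_buildingCost, buildingCost_merge, sum_union_ite_mem h, mul_add,
    sum_add_distrib]
  simp only [ESSol.merge]
  ring

theorem add_feasibleCosts_subset (h : Disjoint S₁ S₂) :
    feasibleCosts p S₁ + feasibleCosts p S₂ ⊆ feasibleCosts p (S₁ ∪ S₂) := by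
  rintro _ ⟨_, ⟨s₁, h₁, rfl⟩, _, ⟨s₂, h₂, rfl⟩, rfl⟩
  exact ⟨s₁.merge S₁ s₂, feasible_merge h h₁ h₂, cost_merge h s₁ s₂⟩

end Merge

/-- **Theorem 1 (subadditivity of the ES coalition game).** If `0 ≤ c⁻ₜ ≤ c⁺ₜ` for every
time slot, then for any disjoint coalitions `S¹, S²`, `ν(S¹ ∪ S²) ≤ ν(S¹) + ν(S²)`. -/
theorem es_coalition_subadditive [Fintype Ω] [DecidableEq ι]
    (p : ESParams ι Ω T)
    (hprice : ∀ t : Fin T, 0 ≤ p.csell t ∧ p.csell t ≤ p.cbuy t)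
    (S1 S2 : Finset ι) (hdisj : S1 ∩ S2 = ∅) :
    nu p (S1 ∪ S2) ≤ nu p S1 + nu p S2 := by
  have hne₁ := feasibleCosts_nonempty p S1
  have hne₂ := feasibleCosts_nonempty p S2
  calc nu p (S1 ∪ S2) ≤ sInf (feasibleCosts p S1 + feasibleCosts p S2) :=
        csInf_le_csInf (bddBelow_feasibleCosts hprice _) (hne₁.add hne₂)
          (add_feasibleCosts_subset (disjoint_iff_inter_eq_empty.mpr hdisj))
    _ = nu p S1 + nu p S2 :=
        csInf_add hne₁ (bddBelow_feasibleCosts hprice S1) hne₂ (bddBelow_feasibleCosts hprice S2)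
end

section
/- Proposition 1, part (i) (redundancy of the purchase/sell complementarity constraint): Assume c⁺_t > c⁻_t ≥ 0 for every time slot t and ρ_ω > 0 for every scenario ω. Then every relaxed feasible solution for a coalition S whose cost equals ν(S) (i.e., every cost-minimizing relaxed feasible solution) satisfies p^{g+}_{i,t,ω} · p^{g−}_{i,t,ω} = 0 for all i ∈ S, t, ω. In particular, if p^{g+}_{i,t,ω} > 0 and p^{g−}_{i,t,ω} > 0 for some (i,t,ω), then subtracting m = min(p^{g+}_{i,t,ω}, p^{g−}_{i,t,ω}) from both yields another relaxed feasible solution with strictly smaller cost. -/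
open Finset

variable {ι Ω : Type} {T : ℕ}

/-- The solution obtained from `s` by subtracting `m` from both the grid purchase and the
grid sale of building `i` at time `t` in scenario `ω` (all other variables unchanged). -/
def shiftBuySell [DecidableEq ι] [DecidableEq Ω] (s : ESSol ι Ω T)
    (i : ι) (t : Fin T) (ω : Ω) (m : ℝ) : ESSol ι Ω T :=
  { s with
    pbuy := fun j u ω' =>
      if j = i ∧ u = t ∧ ω' = ω then s.pbuy i t ω - m else s.pbuy j u ω'
    psell := fun j u ω' =>
      if j = i ∧ u = t ∧ ω' = ω then s.psell i t ω - m else s.psell j u ω' }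

/-! Subtracting `m = min(p⁺, p⁻)` from both the purchase and the sale of one slot keeps the
balance equation (only `p⁺ - p⁻` enters it) and every bound, and lowers the cost by
`ρ_ω (c⁺_t - c⁻_t) m > 0`. Because `c⁺ ≥ c⁻ ≥ 0`, each slot's grid cost is at least
`c⁺_t (d - p^{dis,max})`, so the feasible costs are bounded below and `ν(S)` is a genuine
infimum: a minimizer cannot be improved, hence has no slot with `p⁺ p⁻ > 0`. -/

section
variable [Fintype Ω]

theorem feasible_shiftBuySell [DecidableEq ι] [DecidableEq Ω] {p : ESParams ι Ω T}
    {S : Finset ι} {s : ESSol ι Ω T} (hs : Feasible p S s) (i : ι) (t : Fin T) (ω : Ω)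
    {m : ℝ} (hm : 0 ≤ m) (hmb : m ≤ s.pbuy i t ω) (hms : m ≤ s.psell i t ω) :
    Feasible p S (shiftBuySell s i t ω m) := by
  obtain ⟨hE, hP, hop, hinit, hcap⟩ := hs
  refine ⟨hE, hP, fun j hj ω' u => ?_, hinit, hcap⟩
  obtain ⟨h1, h2, h3, h4, h5, h6, h7, h8, h9, h10⟩ := hop j hj ω' u
  simp only [shiftBuySell]
  split_ifs with h
  · obtain ⟨rfl, rfl, rfl⟩ := h
    exact ⟨h1, h2, h3, h4, by linarith, by linarith, by linarith, by linarith, by linarith, h10⟩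
  · exact ⟨h1, h2, h3, h4, h5, h6, h7, h8, h9, h10⟩

theorem cost_shiftBuySell [DecidableEq ι] [DecidableEq Ω] (p : ESParams ι Ω T)
    {S : Finset ι} (s : ESSol ι Ω T) {i : ι} (hi : i ∈ S) (t : Fin T) (ω : Ω) (m : ℝ) :
    cost p S (shiftBuySell s i t ω m) = cost p S s - p.ρ ω * ((p.cbuy t - p.csell t) * m) := by
  have hslot : ∀ ω' j u, p.cbuy u * (shiftBuySell s i t ω m).pbuy j u ω'
      - p.csell u * (shiftBuySell s i t ω m).psell j u ω'
      = p.cbuy u * s.pbuy j u ω' - p.csell u * s.psell j u ω'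
        - if j = i ∧ u = t ∧ ω' = ω then (p.cbuy t - p.csell t) * m else 0 := by
    intro ω' j u
    simp only [shiftBuySell]
    split_ifs with h
    · obtain ⟨rfl, rfl, rfl⟩ := h
      ring
    · ring
  have hcollapse : ∑ ω', p.ρ ω' * ∑ j ∈ S, ∑ u : Fin T,
      (if j = i ∧ u = t ∧ ω' = ω then (p.cbuy t - p.csell t) * m else 0)
      = p.ρ ω * ((p.cbuy t - p.csell t) * m) := by
    simp [ite_and, Finset.sum_ite_eq', hi]
  simp only [cost, hslot, Finset.sum_sub_distrib, sub_add_eq_add_sub, mul_sub, ← hcollapse]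
  simp only [shiftBuySell]
  ring

theorem cbuy_mul_sub_pdismax_le {p : ESParams ι Ω T} {S : Finset ι} {s : ESSol ι Ω T}
    (hs : Feasible p S s) {j : ι} (hj : j ∈ S) (u : Fin T) (ω : Ω)
    (hbuy : 0 ≤ p.cbuy u) (hsell : p.csell u ≤ p.cbuy u) :
    p.cbuy u * (p.d j u ω - p.pdismax) ≤ p.cbuy u * s.pbuy j u ω - p.csell u * s.psell j u ω := by
  obtain ⟨hch, -, -, hdis, -, hsell0, hbal, -⟩ := hs.2.2.1 j hj ω u
  have hnet : p.d j u ω - p.pdismax ≤ s.pbuy j u ω - s.psell j u ω := by linarith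
  nlinarith [mul_le_mul_of_nonneg_left hnet hbuy, mul_nonneg (sub_nonneg.2 hsell) hsell0]

theorem bddBelow_feasible_costs (p : ESParams ι Ω T) (S : Finset ι)
    (hbuy : ∀ t, 0 ≤ p.cbuy t) (hsell : ∀ t, p.csell t ≤ p.cbuy t) :
    BddBelow {c : ℝ | ∃ s : ESSol ι Ω T, Feasible p S s ∧ cost p S s = c} := by
  refine ⟨∑ ω, p.ρ ω * ∑ j ∈ S, ∑ u, p.cbuy u * (p.d j u ω - p.pdismax), ?_⟩
  rintro _ ⟨s, hs, rfl⟩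
  have hgrid : ∑ ω, p.ρ ω * ∑ j ∈ S, ∑ u, p.cbuy u * (p.d j u ω - p.pdismax)
      ≤ ∑ ω, p.ρ ω * ∑ j ∈ S,
        ((∑ u, (p.cbuy u * s.pbuy j u ω - p.csell u * s.psell j u ω)) + p.cmax * s.pmax j ω) := by
    gcongr with ω _ j hj
    · exact p.ρ_nonneg ω
    · refine le_add_of_le_of_nonneg (Finset.sum_le_sum fun u _ => ?_) ?_
      · exact cbuy_mul_sub_pdismax_le hs hj u ω (hbuy u) (hsell u)
      · exact mul_nonneg p.cmax_nonneg (hs.2.2.2.1 j hj ω).2.1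
  have hcap : 0 ≤ p.ke * s.E + p.kp * s.P :=
    add_nonneg (mul_nonneg p.ke_nonneg hs.1) (mul_nonneg p.kp_nonneg hs.2.1)
  unfold cost
  linarith

theorem nu_le_cost {p : ESParams ι Ω T} {S : Finset ι} {s : ESSol ι Ω T}
    (hbuy : ∀ t, 0 ≤ p.cbuy t) (hsell : ∀ t, p.csell t ≤ p.cbuy t) (hs : Feasible p S s) :
    nu p S ≤ cost p S s :=
  csInf_le (bddBelow_feasible_costs p S hbuy hsell) ⟨s, hs, rfl⟩

theorem cost_shiftBuySell_lt [DecidableEq ι] [DecidableEq Ω] {p : ESParams ι Ω T}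
    {S : Finset ι} (s : ESSol ι Ω T) {i : ι} (hi : i ∈ S) {t : Fin T} {ω : Ω} {m : ℝ}
    (hprice : p.csell t < p.cbuy t) (hρ : 0 < p.ρ ω) (hm : 0 < m) :
    cost p S (shiftBuySell s i t ω m) < cost p S s := by
  rw [cost_shiftBuySell p s hi]
  have := mul_pos hρ (mul_pos (sub_pos.2 hprice) hm)
  linarith

end

/-- **Proposition 1, part (i).** Assume `c⁺ₜ > c⁻ₜ ≥ 0` for every `t` and `ρ_ω > 0` for every
`ω`. Then every cost-minimizing relaxed feasible solution for a coalition `S` satisfies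
`p^{g+}_{i,t,ω} · p^{g-}_{i,t,ω} = 0`; in particular, if both are positive at some `(i,t,ω)`,
subtracting `m = min(p^{g+}, p^{g-})` from both yields another relaxed feasible solution
with strictly smaller cost. -/
theorem es_buy_sell_complementarity [Fintype Ω] [DecidableEq ι] [DecidableEq Ω]
    (p : ESParams ι Ω T)
    (hprice : ∀ t : Fin T, 0 ≤ p.csell t ∧ p.csell t < p.cbuy t)
    (hρ : ∀ ω : Ω, 0 < p.ρ ω) (S : Finset ι) :
    (∀ s : ESSol ι Ω T, Feasible p S s → cost p S s = nu p S →
      ∀ i ∈ S, ∀ t : Fin T, ∀ ω : Ω, s.pbuy i t ω * s.psell i t ω = 0) ∧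
    (∀ s : ESSol ι Ω T, Feasible p S s → ∀ i ∈ S, ∀ t : Fin T, ∀ ω : Ω,
      0 < s.pbuy i t ω → 0 < s.psell i t ω →
      Feasible p S (shiftBuySell s i t ω (min (s.pbuy i t ω) (s.psell i t ω))) ∧
      cost p S (shiftBuySell s i t ω (min (s.pbuy i t ω) (s.psell i t ω))) < cost p S s) := by
  have hsell : ∀ t, p.csell t ≤ p.cbuy t := fun t => (hprice t).2.le
  have hbuy : ∀ t, 0 ≤ p.cbuy t := fun t => (hprice t).1.trans (hsell t)
  have improve : ∀ s : ESSol ι Ω T, Feasible p S s → ∀ i ∈ S, ∀ t : Fin T, ∀ ω : Ω,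
      0 < s.pbuy i t ω → 0 < s.psell i t ω →
      Feasible p S (shiftBuySell s i t ω (min (s.pbuy i t ω) (s.psell i t ω))) ∧
      cost p S (shiftBuySell s i t ω (min (s.pbuy i t ω) (s.psell i t ω))) < cost p S s :=
    fun s hs i hi t ω hb hse =>
      ⟨feasible_shiftBuySell hs i t ω (le_min hb.le hse.le) (min_le_left _ _) (min_le_right _ _),
        cost_shiftBuySell_lt s hi (hprice t).2 (hρ ω) (lt_min hb hse)⟩
  refine ⟨fun s hs hopt i hi t ω => ?_, improve⟩
  obtain ⟨-, -, -, -, hb0, hs0, -⟩ := hs.2.2.1 i hi ω t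
  by_contra hne
  obtain ⟨hb, hse⟩ := mul_ne_zero_iff.1 hne
  obtain ⟨hfeas, hlt⟩ := improve s hs i hi t ω (hb0.lt_of_ne' hb) (hs0.lt_of_ne' hse)
  exact (nu_le_cost hbuy hsell hfeas).not_gt (hopt ▸ hlt)
end

section
/- Proposition 1 (relaxation of the complementarity constraints is exact): Assume 0 ≤ c⁻_t ≤ c⁺_t for every time slot t and that the demand-charge price satisfies c^max = 0. Then for every coalition S ⊆ 𝒩, ν(S) = ν°(S); that is, dropping the complementarity constraints p^{ch}_{i,t,ω} p^{dis}_{i,t,ω} = 0 and p^{g+}_{i,t,ω} p^{g−}_{i,t,ω} = 0 does not change the optimal value: for every relaxed feasible solution there exists a feasible solution satisfying both families of complementarity constraints whose cost is no greater. -/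
open Finset

variable {ι Ω : Type} {T : ℕ}

/-- Feasibility for the original (non-relaxed) problem: relaxed feasibility together with
the complementarity constraints
`p^{ch}_{i,t,ω} p^{dis}_{i,t,ω} = 0` and `p^{g+}_{i,t,ω} p^{g-}_{i,t,ω} = 0`. -/
def FeasibleC [Fintype Ω] (p : ESParams ι Ω T) (S : Finset ι) (s : ESSol ι Ω T) : Prop :=
  Feasible p S s ∧
    ∀ i ∈ S, ∀ ω : Ω, ∀ t : Fin T,
      s.pch i t ω * s.pdis i t ω = 0 ∧ s.pbuy i t ω * s.psell i t ω = 0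

/-- Coalition value of the original (non-relaxed) problem. -/
noncomputable def nuC [Fintype Ω] (p : ESParams ι Ω T) (S : Finset ι) : ℝ :=
  sInf {c : ℝ | ∃ s : ESSol ι Ω T, FeasibleC p S s ∧ cost p S s = c}

/-!
Given a relaxed solution, first cancel simultaneous charging and discharging: lowering
`p^{ch}` by `δ = min(p^{ch}, p^{dis} / (η^{ch} η^{dis}))` and `p^{dis}` by `η^{ch} η^{dis} δ`
leaves the storage trajectory unchanged, makes one of the two rates vanish, and lowers
every shared-power usage and the net grid demand (the round-trip efficiency is at most 1).
Then buy the positive part and sell the negative part of the new net demand. Since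
`0 ≤ c⁻ ≤ c⁺`, netting purchases against sales and lowering the net demand can only
reduce the energy bill, and with `c^max = 0` the peak level may be raised freely. So every
relaxed solution is dominated by a complementary one, and the two infima coincide.
-/

section OrderedRing

variable {α : Type*} [CommRing α] [LinearOrder α] [IsStrictOrderedRing α]

lemma posPart_mul_negPart (a : α) : a⁺ * a⁻ = 0 := by
  rcases le_total 0 a with h | h
  · simp [negPart_eq_zero.2 h]
  · simp [posPart_eq_zero.2 h]

lemma mul_posPart_sub_mul_negPart_le {cb cs pb ps x : α} (hcs : 0 ≤ cs) (hcsb : cs ≤ cb)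
    (hpb : 0 ≤ pb) (hps : 0 ≤ ps) (hx : x ≤ pb - ps) :
    cb * x⁺ - cs * x⁻ ≤ cb * pb - cs * ps := by
  rcases le_total 0 x with h | h
  · rw [posPart_eq_self.2 h, negPart_eq_zero.2 h]
    linarith [mul_le_mul_of_nonneg_left hx (hcs.trans hcsb),
      mul_nonneg (sub_nonneg.2 hcsb) hps]
  · rw [posPart_eq_zero.2 h, negPart_eq_neg.2 h]
    linarith [mul_le_mul_of_nonneg_left hx hcs, mul_le_mul_of_nonneg_right hcsb hpb]

end OrderedRing

section OrderedField

variable {α : Type*} [Field α] [LinearOrder α] [IsStrictOrderedRing α]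

lemma mul_min_div_le {η : α} (hη : 0 < η) (a b : α) : η * min a (b / η) ≤ b :=
  calc η * min a (b / η) ≤ η * (b / η) := by gcongr; exact min_le_right _ _
    _ = b := mul_div_cancel₀ b hη.ne'

lemma sub_min_mul_sub_mul_min_div {η : α} (hη : η ≠ 0) (a b : α) :
    (a - min a (b / η)) * (b - η * min a (b / η)) = 0 := by
  rcases min_cases a (b / η) with ⟨h, _⟩ | ⟨h, _⟩ <;> rw [h]
  · ring
  · rw [mul_div_cancel₀ b hη]; ring

end OrderedField

namespace ESParams

variable (p : ESParams ι Ω T)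

def roundTrip : ℝ := p.ηch * p.ηdis

lemma roundTrip_pos : 0 < p.roundTrip := mul_pos p.ηch_pos p.ηdis_pos

lemma roundTrip_le_one : p.roundTrip ≤ 1 :=
  mul_le_one₀ p.ηch_le_one p.ηdis_pos.le p.ηdis_le_one

lemma charge_sub_discharge_cancel (a b δ : ℝ) :
    p.ηch * (a - δ) - (b - p.roundTrip * δ) / p.ηdis = p.ηch * a - b / p.ηdis := by
  rw [roundTrip]
  field_simp [p.ηdis_pos.ne']
  ring

end ESParams

namespace ESSol

variable (p : ESParams ι Ω T) (s : ESSol ι Ω T)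

/-- The part of the charging power cancelled against discharging. -/
noncomputable def overlap (i : ι) (t : Fin T) (ω : Ω) : ℝ :=
  min (s.pch i t ω) (s.pdis i t ω / p.roundTrip)

noncomputable def netGrid (i : ι) (t : Fin T) (ω : Ω) : ℝ :=
  (s.pch i t ω - s.overlap p i t ω) - (s.pdis i t ω - p.roundTrip * s.overlap p i t ω)
    + p.d i t ω

noncomputable def complementary : ESSol ι Ω T where
  E := s.E
  P := s.P
  pch i t ω := s.pch i t ω - s.overlap p i t ω
  pdis i t ω := s.pdis i t ω - p.roundTrip * s.overlap p i t ω
  sto := s.sto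
  pbuy i t ω := (s.netGrid p i t ω)⁺
  psell i t ω := (s.netGrid p i t ω)⁻
  pmax i ω := ∑ t, |s.netGrid p i t ω|

variable {p s} {i : ι} {t : Fin T} {ω : Ω}

lemma overlap_nonneg (hch : 0 ≤ s.pch i t ω) (hdis : 0 ≤ s.pdis i t ω) :
    0 ≤ s.overlap p i t ω :=
  le_min hch (div_nonneg hdis p.roundTrip_pos.le)

lemma overlap_le_pch : s.overlap p i t ω ≤ s.pch i t ω := min_le_left _ _

lemma roundTrip_mul_overlap_le_pdis : p.roundTrip * s.overlap p i t ω ≤ s.pdis i t ω :=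
  mul_min_div_le p.roundTrip_pos _ _

lemma netGrid_le (hov : 0 ≤ s.overlap p i t ω)
    (hbal : s.pbuy i t ω - s.psell i t ω = s.pch i t ω - s.pdis i t ω + p.d i t ω) :
    s.netGrid p i t ω ≤ s.pbuy i t ω - s.psell i t ω := by
  have hloss : 0 ≤ (1 - p.roundTrip) * s.overlap p i t ω :=
    mul_nonneg (sub_nonneg.2 p.roundTrip_le_one) hov
  rw [hbal, netGrid]
  linarith

lemma abs_netGrid_le_sum (i : ι) (ω : Ω) (t : Fin T) :
    |s.netGrid p i t ω| ≤ ∑ t', |s.netGrid p i t' ω| :=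
  single_le_sum (f := fun t' => |s.netGrid p i t' ω|) (fun _ _ => abs_nonneg _) (mem_univ t)

variable [Fintype Ω] {S : Finset ι}

lemma feasible_complementary (hs : Feasible p S s) : Feasible p S (s.complementary p) := by
  obtain ⟨hE, hP, hop, hinit, hcap⟩ := hs
  refine ⟨hE, hP, fun i hi ω t => ?_, fun i hi ω => ?_, fun ω t => ?_⟩ <;>
    dsimp only [complementary]
  · obtain ⟨hch0, hchmax, hdis0, hdismax, -, -, -, -, -, hsto⟩ := hop i hi ω t
    have hov := overlap_nonneg (p := p) hch0 hdis0
    have hpos := posPart_nonneg (s.netGrid p i t ω)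
    have hneg := negPart_nonneg (s.netGrid p i t ω)
    have habs := posPart_add_negPart (s.netGrid p i t ω)
    have hsum := abs_netGrid_le_sum (p := p) (s := s) i ω t
    refine ⟨sub_nonneg.2 overlap_le_pch, by linarith, sub_nonneg.2 roundTrip_mul_overlap_le_pdis,
      by linarith [mul_nonneg p.roundTrip_pos.le hov], hpos, hneg, ?_, by linarith, by linarith, ?_⟩
    · rw [posPart_sub_negPart]; rfl
    · rw [hsto, add_sub_assoc, add_sub_assoc, p.charge_sub_discharge_cancel]
  · obtain ⟨h0, -, hsto⟩ := hinit i hi ω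
    exact ⟨h0, sum_nonneg fun _ _ => abs_nonneg _, hsto⟩
  · obtain ⟨hsto, hch, hdis⟩ := hcap ω t
    refine ⟨hsto, le_trans (sum_le_sum fun i hi => ?_) hch,
      le_trans (sum_le_sum fun i hi => ?_) hdis⟩
    · obtain ⟨hch0, -, hdis0, -⟩ := hop i hi ω t
      exact sub_le_self _ (overlap_nonneg hch0 hdis0)
    · obtain ⟨hch0, -, hdis0, -⟩ := hop i hi ω t
      exact sub_le_self _ (mul_nonneg p.roundTrip_pos.le (overlap_nonneg hch0 hdis0))

lemma feasibleC_complementary (hs : Feasible p S s) : FeasibleC p S (s.complementary p) :=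
  ⟨feasible_complementary hs, fun _ _ _ _ =>
    ⟨sub_min_mul_sub_mul_min_div p.roundTrip_pos.ne' _ _, posPart_mul_negPart _⟩⟩

lemma cost_complementary_le (hprice : ∀ t : Fin T, 0 ≤ p.csell t ∧ p.csell t ≤ p.cbuy t)
    (hcmax : p.cmax = 0) (hs : Feasible p S s) :
    cost p S (s.complementary p) ≤ cost p S s := by
  simp only [cost, complementary, hcmax, zero_mul, add_zero]
  gcongr _ + ∑ ω, _ * ∑ i ∈ S, ∑ t, ?_ with ω _ i hi t _
  · exact p.ρ_nonneg ω
  obtain ⟨hch0, -, hdis0, -, hbuy, hsell, hbal, -⟩ := hs.2.2.1 i hi ω t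
  exact mul_posPart_sub_mul_negPart_le (hprice t).1 (hprice t).2 hbuy hsell
    (netGrid_le (overlap_nonneg hch0 hdis0) hbal)

end ESSol

/-- **Proposition 1 (exactness of the relaxation).** If `0 ≤ c⁻ₜ ≤ c⁺ₜ` for all `t` and the
demand-charge price vanishes, then `ν(S) = ν°(S)` for every coalition `S`: dropping the
complementarity constraints does not change the optimal value, and every relaxed feasible
solution is dominated by a feasible solution satisfying both complementarity families. -/
theorem es_relaxation_exact [Fintype Ω] (p : ESParams ι Ω T)
    (hprice : ∀ t : Fin T, 0 ≤ p.csell t ∧ p.csell t ≤ p.cbuy t)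
    (hcmax : p.cmax = 0) (S : Finset ι) :
    nu p S = nuC p S ∧
    ∀ s : ESSol ι Ω T, Feasible p S s →
      ∃ s' : ESSol ι Ω T, FeasibleC p S s' ∧ cost p S s' ≤ cost p S s := by
  refine ⟨csInf_eq_csInf_of_forall_exists_le ?_ ?_, fun s hs =>
    ⟨s.complementary p, ESSol.feasibleC_complementary hs,
      ESSol.cost_complementary_le hprice hcmax hs⟩⟩
  · rintro _ ⟨s, hs, rfl⟩
    exact ⟨_, ⟨s.complementary p, ESSol.feasibleC_complementary hs, rfl⟩,
      ESSol.cost_complementary_le hprice hcmax hs⟩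
  · rintro _ ⟨s, hs, rfl⟩
    exact ⟨_, ⟨s, hs.1, rfl⟩, le_rfl⟩
end
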